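/- If p is an odd prime, then s · P_{2p}(s,t) = {p+1} + t{p-1}, where P_{2p} is the Lucas atom of index 2p. -/
import Mathlib


open MvPolynomial

noncomputable def lucas : ℕ → MvPolynomial (Fin 2) ℤ
  | 0 => 0
  | 1 => 1
  | (n+2) => X 0 * lucas (n+1) + X 1 * lucas n

lemma lucas_add (m n : ℕ) :
    lucas (m + n + 1) = lucas (m + 1) * lucas (n + 1) + X 1 * lucas m * lucas n := by
  induction m using Nat.twoStepInduction with
  | zero => simp [lucas]
  | one =>
      rw [show 1 + n + 1 = n + 2 by ring]
      show lucas (n + 2) = lucas 2 * lucas (n + 1) + X 1 * lucas 1 * lucas n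
      have h2 : lucas 2 = X 0 * lucas 1 + X 1 * lucas 0 := rfl
      simp only [lucas, h2]
      ring
  | more m ih1 ih2 =>
      have e1 : m + 2 + n + 1 = (m + n + 1) + 2 := by ring
      have e2 : m + 2 + 1 = (m + 1) + 2 := by ring
      rw [e1, e2]
      show X 0 * lucas (m + n + 1 + 1) + X 1 * lucas (m + n + 1) =
        (X 0 * lucas (m + 1 + 1) + X 1 * lucas (m + 1)) * lucas (n + 1) +
          X 1 * lucas (m + 2) * lucas n
      have e3 : m + n + 1 + 1 = (m + 1) + n + 1 := by ring
      rw [e3, ih2, ih1]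
      have h3 : lucas (m + 2) = X 0 * lucas (m + 1) + X 1 * lucas m := rfl
      rw [h3]
      ring

lemma lucas_eval_pos (n : ℕ) : 0 < eval (fun _ => (1 : ℤ)) (lucas (n + 1)) := by
  induction n using Nat.twoStepInduction with
  | zero => simp [lucas]
  | one =>
      have h2 : lucas 2 = X 0 * lucas 1 + X 1 * lucas 0 := rfl
      simp [h2, lucas]
  | more m ih1 ih2 =>
      have h3 : lucas (m + 2 + 1) = X 0 * lucas (m + 2) + X 1 * lucas (m + 1) := rfl
      rw [h3]
      simp only [map_add, map_mul, eval_X]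
      nlinarith

lemma lucas_ne_zero (n : ℕ) : lucas (n + 1) ≠ 0 := by
  intro h
  have := lucas_eval_pos n
  rw [h] at this
  simp at this

theorem s_mul_atom_two_p (p : ℕ) (hp : p.Prime) (hodd : Odd p)
    (P : MvPolynomial (Fin 2) ℤ)
    (hP : lucas (2 * p) = lucas 1 * lucas 2 * lucas p * P) :
    X 0 * P = lucas (p + 1) + X 1 * lucas (p - 1) := by
  obtain ⟨k, rfl⟩ : ∃ k, p = k + 1 := ⟨p - 1, (Nat.succ_pred_eq_of_pos hp.pos).symm⟩
  have e : 2 * (k + 1) = (k + 1) + k + 1 := by ring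
  rw [e, lucas_add] at hP
  have h1 : lucas 1 = 1 := rfl
  have h2 : lucas 2 = X 0 * lucas 1 + X 1 * lucas 0 := rfl
  have hfac : lucas (k + 1) * (lucas (k + 1 + 1) + X 1 * lucas k) =
      lucas (k + 1) * (X 0 * P) := by
    rw [mul_comm (lucas (k+1)) (X 0 * P)]
    rw [h1, h2] at hP
    simp only [lucas] at hP ⊢
    linear_combination hP
  have := mul_left_cancel₀ (lucas_ne_zero k) hfac
  simp only [Nat.add_sub_cancel]
  exact this.symm
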